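/- The multi-fixpoint-combinator translation N is convergence-equivalent: for every ℒ-expression s, s ↓_name if and only if N(s) ↓_lcc. -/

import Mathlib

/-! # Core syntax for the calculi L_lcc, L_name and LR

Following Schmidt-Schauß, Sabel, Machkasova,
"Simulation in the Call-by-Need Lambda-Calculus with Letrec, Case, Constructors, and Seq".

Expressions use de Bruijn indices.  A signature fixes the set of types, the data
constructors of each type together with their arities, and a distinguished type `Bool`
with the 0-ary constructors `True` and `False`. -/



structure Sig : Type 1 where
  TyName : Type
  CName : TyName → Type
  deceq : ∀ T, DecidableEq (CName T)
  arity : ∀ T, CName T → ℕ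
  boolTy : TyName
  trueC : CName boolTy
  falseC : CName boolTy
  true_arity : arity boolTy trueC = 0
  false_arity : arity boolTy falseC = 0
  true_ne_false : trueC ≠ falseC

variable (S : Sig)

/-- ℒ-expressions (de Bruijn): variables, applications, abstractions, fully saturated
constructor applications, `seq`, `case` (with exactly one alternative per constructor
of the scrutinized type; the alternative for `c` binds `arity c` variables), and
`letrec` with `n+1` mutually recursive bindings (so at least one binding); the
bindings and the body are under the `n+1` letrec binders.
The letrec-free expressions are the expressions of `L_lcc`. -/
inductive Exp : Type where
  | var : ℕ → Exp
  | app : Exp → Exp → Exp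
  | lam : Exp → Exp
  | constr : (T : S.TyName) → (c : S.CName T) → (Fin (S.arity T c) → Exp) → Exp
  | seqE : Exp → Exp → Exp
  | caseE : (T : S.TyName) → Exp → ((c : S.CName T) → Exp) → Exp
  | letrecE : (n : ℕ) → (Fin (n+1) → Exp) → Exp → Exp

namespace Core

variable {S}

/-- lift a renaming under `m` binders -/
def liftN (m : ℕ) (f : ℕ → ℕ) : ℕ → ℕ := fun k => if k < m then k else f (k - m) + m

/-- renaming of de Bruijn indices -/
def rename (f : ℕ → ℕ) : Exp S → Exp S
  | .var k => .var (f k)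
  | .app u v => .app (rename f u) (rename f v)
  | .lam u => .lam (rename (liftN 1 f) u)
  | .constr T c args => .constr T c (fun i => rename f (args i))
  | .seqE u v => .seqE (rename f u) (rename f v)
  | .caseE T e alts => .caseE T (rename f e) (fun c => rename (liftN (S.arity T c) f) (alts c))
  | .letrecE n b t => .letrecE n (fun i => rename (liftN (n+1) f) (b i)) (rename (liftN (n+1) f) t)

/-- lift a substitution under `m` binders -/
def upN (m : ℕ) (σ : ℕ → Exp S) : ℕ → Exp S :=
  fun k => if k < m then .var k else rename (· + m) (σ (k - m))

/-- parallel substitution -/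
def subst (σ : ℕ → Exp S) : Exp S → Exp S
  | .var k => σ k
  | .app u v => .app (subst σ u) (subst σ v)
  | .lam u => .lam (subst (upN 1 σ) u)
  | .constr T c args => .constr T c (fun i => subst σ (args i))
  | .seqE u v => .seqE (subst σ u) (subst σ v)
  | .caseE T e alts => .caseE T (subst σ e) (fun c => subst (upN (S.arity T c) σ) (alts c))
  | .letrecE n b t => .letrecE n (fun i => subst (upN (n+1) σ) (b i)) (subst (upN (n+1) σ) t)

/-- the substitution `[t/x0]` for the outermost binder -/
def consSub (t : Exp S) : ℕ → Exp S
  | 0 => t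
  | (k+1) => .var k

/-- the substitution replacing the `m` innermost binders by `args` -/
def instSub {m : ℕ} (args : Fin m → Exp S) : ℕ → Exp S :=
  fun k => if h : k < m then args ⟨k, h⟩ else .var (k - m)

/-- `closedUnder d e`: all free de Bruijn indices of `e` are `< d` -/
def closedUnder : ℕ → Exp S → Prop
  | d, .var k => k < d
  | d, .app u v => closedUnder d u ∧ closedUnder d v
  | d, .lam u => closedUnder (d+1) u
  | d, .constr _ _ args => ∀ i, closedUnder d (args i)
  | d, .seqE u v => closedUnder d u ∧ closedUnder d v
  | d, .caseE T e alts => closedUnder d e ∧ ∀ c, closedUnder (d + S.arity T c) (alts c)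
  | d, .letrecE n b t => (∀ i, closedUnder (d + (n+1)) (b i)) ∧ closedUnder (d + (n+1)) t

/-- a closed expression -/
def closed (e : Exp S) : Prop := closedUnder 0 e

/-- letrec-free expressions, i.e. the expressions of the calculus `L_lcc` -/
def lfree : Exp S → Prop
  | .var _ => True
  | .app u v => lfree u ∧ lfree v
  | .lam u => lfree u
  | .constr _ _ args => ∀ i, lfree (args i)
  | .seqE u v => lfree u ∧ lfree v
  | .caseE _ e alts => lfree e ∧ ∀ c, lfree (alts c)
  | .letrecE _ _ _ => False

/-- values: abstractions and constructor applications -/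
def isValue : Exp S → Prop
  | .lam _ => True
  | .constr _ _ _ => True
  | _ => False

/-- constructor applications -/
def isConstrApp (e : Exp S) : Prop := ∃ T c args, e = .constr T c args

/-- the diverging expression `Ω = (λz. z z) (λx. x x)` -/
def Omega : Exp S :=
  .app (.lam (.app (.var 0) (.var 0))) (.lam (.app (.var 0) (.var 0)))

/-- the constructor `True` (of the distinguished type `Bool`, arity 0) -/
def trueE : Exp S := .constr S.boolTy S.trueC (fun _ => .var 0)

/-- update the alternative for constructor `c0` -/
def updAlt {T : S.TyName} (alts : (c : S.CName T) → Exp S) (c0 : S.CName T) (e : Exp S) :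
    (c : S.CName T) → Exp S :=
  fun c => letI := S.deceq T; if c = c0 then e else alts c

end Core
namespace Core

variable {S : Sig}

/-! ## Contexts -/

/-- reduction contexts of `L_lcc` (and `A`-contexts of `L_name`):
`A ::= [·] | (A s) | (case_T A of alts) | (seq A s)` -/
inductive ACtx (S : Sig) : Type where
  | hole : ACtx S
  | appA : ACtx S → Exp S → ACtx S
  | seqA : ACtx S → Exp S → ACtx S
  | caseA : (T : S.TyName) → ACtx S → ((c : S.CName T) → Exp S) → ACtx S

/-- plugging an expression into an `A`-context -/
def plugA : ACtx S → Exp S → Exp S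
  | .hole, e => e
  | .appA A t, e => .app (plugA A e) t
  | .seqA A t, e => .seqE (plugA A e) t
  | .caseA T A alts, e => .caseE T (plugA A e) alts

/-- renaming an `A`-context (there are no binders above the hole) -/
def renameA (f : ℕ → ℕ) : ACtx S → ACtx S
  | .hole => .hole
  | .appA A t => .appA (renameA f A) (rename f t)
  | .seqA A t => .seqA (renameA f A) (rename f t)
  | .caseA T A alts => .caseA T (renameA f A) (fun c => rename (liftN (S.arity T c) f) (alts c))

/-- general (one-hole, possibly capturing) contexts over ℒ-expressions -/
inductive Ctx (S : Sig) : Type where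
  | hole : Ctx S
  | appL : Ctx S → Exp S → Ctx S
  | appR : Exp S → Ctx S → Ctx S
  | lamC : Ctx S → Ctx S
  | seqL : Ctx S → Exp S → Ctx S
  | seqR : Exp S → Ctx S → Ctx S
  | constrC : (T : S.TyName) → (c : S.CName T) → Fin (S.arity T c) →
      (Fin (S.arity T c) → Exp S) → Ctx S → Ctx S
  | caseScrut : (T : S.TyName) → Ctx S → ((c : S.CName T) → Exp S) → Ctx S
  | caseAlt : (T : S.TyName) → (c0 : S.CName T) → Exp S → ((c : S.CName T) → Exp S) →
      Ctx S → Ctx S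
  | letrecB : (n : ℕ) → Fin (n+1) → (Fin (n+1) → Exp S) → Ctx S → Exp S → Ctx S
  | letrecT : (n : ℕ) → (Fin (n+1) → Exp S) → Ctx S → Ctx S

/-- plugging (capture-permitting) into a general context -/
def plugC : Ctx S → Exp S → Exp S
  | .hole, e => e
  | .appL C t, e => .app (plugC C e) t
  | .appR t C, e => .app t (plugC C e)
  | .lamC C, e => .lam (plugC C e)
  | .seqL C t, e => .seqE (plugC C e) t
  | .seqR t C, e => .seqE t (plugC C e)
  | .constrC T c i args C, e => .constr T c (Function.update args i (plugC C e))
  | .caseScrut T C alts, e => .caseE T (plugC C e) alts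
  | .caseAlt T c0 scrut alts C, e => .caseE T scrut (updAlt alts c0 (plugC C e))
  | .letrecB n i b C t, e => .letrecE n (Function.update b i (plugC C e)) t
  | .letrecT n b C, e => .letrecE n b (plugC C e)

/-- number of binders above the hole of a context -/
def depthC : Ctx S → ℕ
  | .hole => 0
  | .appL C _ => depthC C
  | .appR _ C => depthC C
  | .lamC C => depthC C + 1
  | .seqL C _ => depthC C
  | .seqR _ C => depthC C
  | .constrC _ _ _ _ C => depthC C
  | .caseScrut _ C _ => depthC C
  | .caseAlt T c0 _ _ C => depthC C + S.arity T c0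
  | .letrecB n _ _ C _ => depthC C + (n+1)
  | .letrecT n _ C => depthC C + (n+1)

/-- letrec-free contexts, i.e. the contexts of `L_lcc` -/
def lfreeCtx : Ctx S → Prop
  | .hole => True
  | .appL C t => lfreeCtx C ∧ lfree t
  | .appR t C => lfree t ∧ lfreeCtx C
  | .lamC C => lfreeCtx C
  | .seqL C t => lfreeCtx C ∧ lfree t
  | .seqR t C => lfree t ∧ lfreeCtx C
  | .constrC _ _ _ args C => (∀ i, lfree (args i)) ∧ lfreeCtx C
  | .caseScrut _ C alts => lfreeCtx C ∧ ∀ c, lfree (alts c)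
  | .caseAlt _ _ scrut alts C => lfree scrut ∧ (∀ c, lfree (alts c)) ∧ lfreeCtx C
  | .letrecB _ _ _ _ _ => False
  | .letrecT _ _ _ => False

/-! ## The calculus `L_lcc` -/

/-- the basic reduction rules (nbeta), (nseq), (ncase) of `L_lcc` -/
inductive LccBase : Exp S → Exp S → Prop where
  | nbeta {u t} : LccBase (.app (.lam u) t) (subst (consSub t) u)
  | nseq {v t} : isValue v → LccBase (.seqE v t) t
  | ncase {T c args alts} :
      LccBase (.caseE T (.constr T c args) alts) (subst (instSub args) (alts c))

/-- normal-order reduction of `L_lcc`: a basic rule inside a reduction context -/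
def lccStep (s t : Exp S) : Prop :=
  ∃ (A : ACtx S) (r r' : Exp S), LccBase r r' ∧ s = plugA A r ∧ t = plugA A r'

/-- `s` reduces in finitely many normal-order steps to the value `v` -/
def lccConvTo (s v : Exp S) : Prop := Relation.ReflTransGen lccStep s v ∧ isValue v

/-- convergence in `L_lcc` -/
def lccConv (s : Exp S) : Prop := ∃ v, lccConvTo s v

/-- contextual preorder of `L_lcc` (quantifying over the letrec-free contexts) -/
def leLcc (s t : Exp S) : Prop :=
  ∀ C : Ctx S, lfreeCtx C → lccConv (plugC C s) → lccConv (plugC C t)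

/-- contextual equivalence of `L_lcc` -/
def eqLcc (s t : Exp S) : Prop := leLcc s t ∧ leLcc t s

/-- open extension of a relation, w.r.t. closing `L_lcc`-substitutions -/
def openL (η : Exp S → Exp S → Prop) (s t : Exp S) : Prop :=
  ∀ σ : ℕ → Exp S, (∀ k, lfree (σ k)) →
    closed (subst σ s) → closed (subst σ t) → η (subst σ s) (subst σ t)

/-- `cBot`: expressions all of whose closing `L_lcc`-instances diverge -/
def cBot (s : Exp S) : Prop :=
  ∀ σ : ℕ → Exp S, (∀ k, lfree (σ k)) → closed (subst σ s) → ¬ lccConv (subst σ s)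

/-- greatest fixpoint of a (monotone) operator on relations:
the union of all post-fixed points -/
def gfpRel {α : Type*} (F : (α → α → Prop) → (α → α → Prop)) (a b : α) : Prop :=
  ∃ η, (∀ x y, η x y → F η x y) ∧ η a b

/-- the operator `F_lcc` for applicative similarity in `L_lcc` -/
def Flcc (η : Exp S → Exp S → Prop) (s t : Exp S) : Prop :=
  (∀ s', lccConvTo s (.lam s') →
      ((∃ t', lccConvTo t (.lam t') ∧ openL η s' t') ∨
       (∃ T c targs, lccConvTo t (.constr T c targs) ∧ cBot s'))) ∧
  (∀ T c args, lccConvTo s (.constr T c args) →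
      ∃ targs, lccConvTo t (.constr T c targs) ∧ ∀ i, η (args i) (targs i))

/-- applicative similarity `≼_lcc` in `L_lcc` -/
def simLcc : Exp S → Exp S → Prop := gfpRel Flcc

end Core
namespace Core

variable {S : Sig}

/-! ## The test contexts `Q_lcc` and `Q_CE` -/

/-- the context `case_T [·] of … ((c x1 … x_ar) → x_i) …`, all other alternatives `Ω` -/
def caseSelCtx (T : S.TyName) (c : S.CName T) (i : Fin (S.arity T c)) : Exp S → Exp S :=
  fun e => .caseE T e (fun c' => letI := S.deceq T; if c' = c then .var i else Omega)

/-- the context `case_T [·] of … ((c x1 … x_ar) → True) …`, all other alternatives `Ω` -/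
def caseTrueCtx (T : S.TyName) (c : S.CName T) : Exp S → Exp S :=
  fun e => .caseE T e (fun c' => letI := S.deceq T; if c' = c then trueE else Omega)

/-- the set `Q_lcc`: application to a closed `L_lcc`-expression, the selector case
contexts, and the `True` case contexts -/
def Qlcc (S : Sig) : Set (Exp S → Exp S) :=
  {f | (∃ r : Exp S, lfree r ∧ closed r ∧ f = fun e => .app e r) ∨
       (∃ T c i, f = caseSelCtx T c i) ∨
       (∃ T c, f = caseTrueCtx T c)}

/-- the set `CE_lcc` of closed letrec-free expressions generated by
`r ::= Ω | λx.s | (c r1 … r_ar)` -/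
inductive CE : Exp S → Prop where
  | omega : CE Omega
  | abs {u : Exp S} : lfree (Exp.lam u) → closed (Exp.lam u) → CE (.lam u)
  | constrI {T c} {args : Fin (S.arity T c) → Exp S} :
      (∀ i, CE (args i)) → CE (.constr T c args)

/-- the set `Q_CE`: like `Q_lcc`, but the arguments in application contexts are
restricted to `CE_lcc` -/
def QCE (S : Sig) : Set (Exp S → Exp S) :=
  {f | (∃ r : Exp S, CE r ∧ f = fun e => .app e r) ∨
       (∃ T c i, f = caseSelCtx T c i) ∨
       (∃ T c, f = caseTrueCtx T c)}

/-- `Q1 (Q2 (… (Qn s)))` -/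
def applyAll (l : List (Exp S → Exp S)) (s : Exp S) : Exp S := l.foldr (fun f e => f e) s

/-! ### `Q`-similarity and the inductive `Q`-preorder in `L_lcc` -/

/-- the `Q`-experiment operator for `L_lcc`, instantiated with a set `𝒬` of contexts -/
def FQlcc (𝒬 : Set (Exp S → Exp S)) (η : Exp S → Exp S → Prop) (s t : Exp S) : Prop :=
  ∀ v1, lccConvTo s v1 → ∃ v2, lccConvTo t v2 ∧ ∀ f ∈ 𝒬, η (f v1) (f v2)

/-- `𝒬`-similarity in `L_lcc` -/
def simQlcc (𝒬 : Set (Exp S → Exp S)) : Exp S → Exp S → Prop := gfpRel (FQlcc 𝒬)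

/-- the inductively defined preorder `≤_{lcc,𝒬}` -/
def leQlcc (𝒬 : Set (Exp S → Exp S)) (s t : Exp S) : Prop :=
  ∀ l : List (Exp S → Exp S), (∀ f ∈ l, f ∈ 𝒬) →
    lccConv (applyAll l s) → lccConv (applyAll l t)

end Core
namespace Core

variable {S : Sig}

/-! ## The call-by-need calculus `LR` -/

/-- variable-to-variable binding chains in a letrec environment -/
inductive derefChain {n : ℕ} (b : Fin (n+1) → Exp S) : Fin (n+1) → Fin (n+1) → Prop where
  | refl (i) : derefChain b i i
  | step {i j k : Fin (n+1)} : b i = .var (j : ℕ) → derefChain b j k → derefChain b i k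

/-- `Needed b body i`: binding `i` is visited by the labeling algorithm (its value is
needed), starting from the body of the top-level letrec -/
inductive Needed {n : ℕ} (b : Fin (n+1) → Exp S) (body : Exp S) : Fin (n+1) → Prop where
  | ofBody {A : ACtx S} {i : Fin (n+1)} : body = plugA A (.var (i : ℕ)) → Needed b body i
  | ofBind {k} {A : ACtx S} {i : Fin (n+1)} :
      Needed b body k → b k = plugA A (.var (i : ℕ)) → Needed b body i

/-- renaming used when merging letrec environments: the outer part
(`N` outer bindings, `M` inner bindings) -/
def rhoOut (N M : ℕ) : ℕ → ℕ := fun k => if k < N then k else k + M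

/-- renaming used when merging letrec environments: the inner part -/
def rhoIn (N M : ℕ) : ℕ → ℕ :=
  fun k => if k < M then k + N else if k < M + N then k - M else k

/-- merged environment of `(llet-in)`: outer bindings first, then inner bindings -/
def mergeEnv {n m : ℕ} (b : Fin (n+1) → Exp S) (b2 : Fin (m+1) → Exp S) :
    Fin (n+m+1+1) → Exp S :=
  fun j => if h : (j : ℕ) < n+1
    then rename (rhoOut (n+1) (m+1)) (b ⟨j, h⟩)
    else rename (rhoIn (n+1) (m+1)) (b2 ⟨(j : ℕ) - (n+1), by omega⟩)

/-- merged environment of `(llet-e)`: the environment of the letrec bound at `i`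
is flattened into the outer environment, the binding `i` becomes the inner body -/
def mergeEnvAt {n m : ℕ} (b : Fin (n+1) → Exp S) (i : Fin (n+1))
    (b2 : Fin (m+1) → Exp S) (t2 : Exp S) : Fin (n+m+1+1) → Exp S :=
  fun j => if h : (j : ℕ) < n+1
    then (if (⟨j, h⟩ : Fin (n+1)) = i
          then rename (rhoIn (n+1) (m+1)) t2
          else rename (rhoOut (n+1) (m+1)) (b ⟨j, h⟩))
    else rename (rhoIn (n+1) (m+1)) (b2 ⟨(j : ℕ) - (n+1), by omega⟩)

/-- the environment produced by `(case-in)`/`(case-e)` with `arity c = m+1`: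
all old bindings are shifted, binding `j` becomes `c y1 … y_{m+1}` for the fresh
bindings `y_q = s_q` appended at the end -/
def caseShareEnv {n m : ℕ} (b : Fin (n+1) → Exp S) (j : Fin (n+1))
    {T : S.TyName} (c : S.CName T) (h : S.arity T c = m+1)
    (args : Fin (S.arity T c) → Exp S) : Fin (n+m+1+1) → Exp S :=
  fun p => if hp : (p : ℕ) < n+1
    then (if (⟨p, hp⟩ : Fin (n+1)) = j
          then .constr T c (fun q => .var (n+1+(q : ℕ)))
          else rename (rhoOut (n+1) (m+1)) (b ⟨p, hp⟩))
    else rename (rhoOut (n+1) (m+1)) (args (Fin.cast h.symm ⟨(p : ℕ) - (n+1), by omega⟩))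

/-- the replacement for a `(case-in)`/`(case-e)` redex: `letrec z1 = y1, …, z_{m+1} = y_{m+1}
in alt`, where the `y_q` are the fresh environment bindings (indices `n+1+q` at top level) -/
def caseShareBody {n m : ℕ} {T : S.TyName} (c : S.CName T) (_h : S.arity T c = m+1)
    (alts : (c : S.CName T) → Exp S) : Exp S :=
  .letrecE m (fun q => .var (n+1+(m+1)+(q : ℕ)))
    (rename (liftN (m+1) (rhoOut (n+1) (m+1))) (alts c))

/-- the basic `LR`-rules not involving the top-level environment:
(lbeta), (seq-c), (case-c), (lapp), (lseq), (lcase) -/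
inductive LRbase : Exp S → Exp S → Prop where
  | lbeta {u t} :
      LRbase (.app (.lam u) t) (.letrecE 0 (fun _ => rename (· + 1) t) u)
  | seqc {v t} : isValue v → LRbase (.seqE v t) t
  | casec0 {T c args alts} (h : S.arity T c = 0) :
      LRbase (.caseE T (.constr T c args) alts) (alts c)
  | casec1 {T c args alts m} (h : S.arity T c = m+1) :
      LRbase (.caseE T (.constr T c args) alts)
        (.letrecE m (fun i => rename (· + (m+1)) (args (Fin.cast h.symm i))) (alts c))
  | lapp {n b e t} :
      LRbase (.app (.letrecE n b e) t) (.letrecE n b (.app e (rename (· + (n+1)) t)))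
  | lseq {n b e t} :
      LRbase (.seqE (.letrecE n b e) t) (.letrecE n b (.seqE e (rename (· + (n+1)) t)))
  | lcase {n b e T alts} :
      LRbase (.caseE T (.letrecE n b e) alts)
        (.letrecE n b (.caseE T e (fun c => rename (liftN (S.arity T c) (· + (n+1))) (alts c))))

/-- normal-order reduction `→_LR` of the call-by-need calculus `LR`:
the rules of Fig. 1, applied at the position determined by the labeling algorithm
(in the body or in a needed binding of the top-level letrec, or — for expressions
without a top-level letrec — along the application/seq/case spine). -/
inductive LRstep : Exp S → Exp S → Prop where
  /- basic rule at the top (no top-level letrec environment involved): -/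
  | topA {A : ACtx S} {r r'} : LRbase r r' → LRstep (plugA A r) (plugA A r')
  /- basic rule in the body of the top-level letrec: -/
  | bodyA {n} {b : Fin (n+1) → Exp S} {A : ACtx S} {r r'} :
      LRbase r r' → LRstep (.letrecE n b (plugA A r)) (.letrecE n b (plugA A r'))
  /- basic rule inside a needed binding: -/
  | bindA {n} {b : Fin (n+1) → Exp S} {body} {i : Fin (n+1)} {A : ACtx S} {r r'} :
      Needed b body i → b i = plugA A r → LRbase r r' →
      LRstep (.letrecE n b body) (.letrecE n (Function.update b i (plugA A r')) body)
  /- (llet-in): -/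
  | lletIn {n b m b2 t2} :
      LRstep (.letrecE n b (.letrecE m b2 t2))
        (.letrecE (n+m+1) (mergeEnv b b2) (rename (rhoIn (n+1) (m+1)) t2))
  /- (llet-e): -/
  | lletE {n b body} {i : Fin (n+1)} {m b2 t2} :
      Needed b body i → b i = .letrecE m b2 t2 →
      LRstep (.letrecE n b body)
        (.letrecE (n+m+1) (mergeEnvAt b i b2 t2) (rename (rhoOut (n+1) (m+1)) body))
  /- (cp-in): -/
  | cpIn {n} {b : Fin (n+1) → Exp S} {A : ACtx S} {i j : Fin (n+1)} {u} :
      derefChain b i j → b j = .lam u →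
      LRstep (.letrecE n b (plugA A (.var (i : ℕ)))) (.letrecE n b (plugA A (.lam u)))
  /- (cp-e): -/
  | cpE {n} {b : Fin (n+1) → Exp S} {body} {k : Fin (n+1)} {A : ACtx S} {i j : Fin (n+1)} {u} :
      Needed b body k → b k = plugA A (.var (i : ℕ)) → derefChain b i j → b j = .lam u →
      LRstep (.letrecE n b body) (.letrecE n (Function.update b k (plugA A (.lam u))) body)
  /- (seq-in): -/
  | seqIn {n} {b : Fin (n+1) → Exp S} {A : ACtx S} {i j : Fin (n+1)} {t} :
      derefChain b i j → isConstrApp (b j) →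
      LRstep (.letrecE n b (plugA A (.seqE (.var (i : ℕ)) t)))
        (.letrecE n b (plugA A t))
  /- (seq-e): -/
  | seqEe {n} {b : Fin (n+1) → Exp S} {body} {k : Fin (n+1)} {A : ACtx S} {i j : Fin (n+1)} {t} :
      Needed b body k → b k = plugA A (.seqE (.var (i : ℕ)) t) →
      derefChain b i j → isConstrApp (b j) →
      LRstep (.letrecE n b body) (.letrecE n (Function.update b k (plugA A t)) body)
  /- (case-in), scrutinized constructor of arity 0: -/
  | caseIn0 {n} {b : Fin (n+1) → Exp S} {A : ACtx S} {i j : Fin (n+1)} {T c args alts} :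
      derefChain b i j → b j = .constr T c args → S.arity T c = 0 →
      LRstep (.letrecE n b (plugA A (.caseE T (.var (i : ℕ)) alts)))
        (.letrecE n b (plugA A (alts c)))
  /- (case-e), scrutinized constructor of arity 0: -/
  | caseE0 {n} {b : Fin (n+1) → Exp S} {body} {k : Fin (n+1)} {A : ACtx S} {i j : Fin (n+1)}
      {T c args alts} :
      Needed b body k → b k = plugA A (.caseE T (.var (i : ℕ)) alts) →
      derefChain b i j → b j = .constr T c args → S.arity T c = 0 →
      LRstep (.letrecE n b body) (.letrecE n (Function.update b k (plugA A (alts c))) body)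
  /- (case-in), arity ≥ 1: the constructor arguments are shared in fresh bindings -/
  | caseIn1 {n} {b : Fin (n+1) → Exp S} {A : ACtx S} {i j : Fin (n+1)} {T c args alts m}
      (h : S.arity T c = m+1) :
      derefChain b i j → b j = .constr T c args →
      LRstep (.letrecE n b (plugA A (.caseE T (.var (i : ℕ)) alts)))
        (.letrecE (n+m+1) (caseShareEnv b j c h args)
          (plugA (renameA (rhoOut (n+1) (m+1)) A) (caseShareBody (n := n) c h alts)))
  /- (case-e), arity ≥ 1: -/
  | caseE1 {n} {b : Fin (n+1) → Exp S} {body} {k : Fin (n+1)} {A : ACtx S} {i j : Fin (n+1)}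
      {T c args alts m} (h : S.arity T c = m+1) :
      Needed b body k → b k = plugA A (.caseE T (.var (i : ℕ)) alts) →
      derefChain b i j → b j = .constr T c args →
      LRstep (.letrecE n b body)
        (.letrecE (n+m+1)
          (Function.update (caseShareEnv b j c h args)
            (Fin.castLE (by omega) k)
            (plugA (renameA (rhoOut (n+1) (m+1)) A) (caseShareBody (n := n) c h alts)))
          (rename (rhoOut (n+1) (m+1)) body))

/-- weak head normal forms of `LR`: values, `letrec Env in v` for a value `v`, and
`letrec x1 = (c s⃗), x2 = x1, …, xm = x_{m-1}, Env in xm` -/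
def isLRwhnf (s : Exp S) : Prop :=
  isValue s ∨
  ∃ (n : ℕ) (b : Fin (n+1) → Exp S) (body : Exp S), s = .letrecE n b body ∧
    (isValue body ∨ ∃ i j : Fin (n+1), body = .var (i : ℕ) ∧ derefChain b i j ∧ isConstrApp (b j))

/-- `s` reduces in finitely many `→_LR`-steps to an `LR`-WHNF `v` -/
def lrConvTo (s v : Exp S) : Prop := Relation.ReflTransGen LRstep s v ∧ isLRwhnf v

/-- convergence in `LR` -/
def lrConv (s : Exp S) : Prop := ∃ v, lrConvTo s v

/-- contextual preorder of `LR` -/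
def leLR (s t : Exp S) : Prop := ∀ C : Ctx S, lrConv (plugC C s) → lrConv (plugC C t)

/-- contextual equivalence of `LR` -/
def eqLR (s t : Exp S) : Prop := leLR s t ∧ leLR t s

end Core
namespace Core

variable {S : Sig}

/-! ## The call-by-name calculus `L_name` -/

/-- a letrec frame (one `letrec` environment) -/
def Frame (S : Sig) : Type := Σ n : ℕ, Fin (n+1) → Exp S

/-- plugging under a stack of letrec frames (`L`-contexts), outermost frame first -/
def plugFrames : List (Frame S) → Exp S → Exp S
  | [], e => e
  | ⟨n, b⟩ :: fs, e => .letrecE n b (plugFrames fs e)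

/-- looking up a de Bruijn index in a stack of letrec frames given innermost-first;
the result is weakened to the innermost level -/
def lookRev : List (Frame S) → ℕ → Option (Exp S)
  | [], _ => none
  | ⟨n, b⟩ :: rest, k =>
      if h : k < n+1 then some (b ⟨k, h⟩)
      else (lookRev rest (k - (n+1))).map (rename (· + (n+1)))

/-- the basic rules of `L_name`: (beta), (seq), (case) — with substitution —
and (lapp), (lseq), (lcase) -/
inductive NBase : Exp S → Exp S → Prop where
  | beta {u t} : NBase (.app (.lam u) t) (subst (consSub t) u)
  | seqv {v t} : isValue v → NBase (.seqE v t) t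
  | casec {T c args alts} :
      NBase (.caseE T (.constr T c args) alts) (subst (instSub args) (alts c))
  | lapp {n b e t} :
      NBase (.app (.letrecE n b e) t) (.letrecE n b (.app e (rename (· + (n+1)) t)))
  | lseq {n b e t} :
      NBase (.seqE (.letrecE n b e) t) (.letrecE n b (.seqE e (rename (· + (n+1)) t)))
  | lcase {n b e T alts} :
      NBase (.caseE T (.letrecE n b e) alts)
        (.letrecE n b (.caseE T e (fun c => rename (liftN (S.arity T c) (· + (n+1))) (alts c))))

/-- normal-order reduction `→_name` of `L_name`: a basic rule, or the copy rule (gcp),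
inside a reduction context `L[A]` -/
inductive NStep : Exp S → Exp S → Prop where
  | base {fs : List (Frame S)} {A : ACtx S} {r r'} :
      NBase r r' → NStep (plugFrames fs (plugA A r)) (plugFrames fs (plugA A r'))
  | gcp {fs : List (Frame S)} {A : ACtx S} {k : ℕ} {e : Exp S} :
      lookRev fs.reverse k = some e →
      NStep (plugFrames fs (plugA A (.var k))) (plugFrames fs (plugA A e))

/-- weak head normal forms of `L_name`: `L[v]` for a value `v` -/
def isNameWhnf (s : Exp S) : Prop :=
  ∃ (fs : List (Frame S)) (v : Exp S), s = plugFrames fs v ∧ isValue v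

/-- `s` reduces in finitely many `→_name`-steps to an `L_name`-WHNF `v` -/
def nameConvTo (s v : Exp S) : Prop := Relation.ReflTransGen NStep s v ∧ isNameWhnf v

/-- convergence in `L_name` -/
def nameConv (s : Exp S) : Prop := ∃ v, nameConvTo s v

/-- contextual preorder of `L_name` -/
def leName (s t : Exp S) : Prop := ∀ C : Ctx S, nameConv (plugC C s) → nameConv (plugC C t)

/-- contextual equivalence of `L_name` -/
def eqName (s t : Exp S) : Prop := leName s t ∧ leName t s

/-! ## The translation `N : L_name → L_lcc` via multi-fixpoint combinators -/

/-- iterated application `f a1 … an` -/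
def apps (f : Exp S) (l : List (Exp S)) : Exp S := l.foldl .app f

/-- iterated abstraction `λ^k. e` -/
def lamN : ℕ → Exp S → Exp S
  | 0, e => e
  | (k+1), e => .lam (lamN k e)

/-- shift all indices `≥ c` by `k` -/
def shiftCut (c k : ℕ) : Exp S → Exp S := rename (fun x => if x < c then x else x + k)

/-- the argument list `[g (N-1), …, g 0]`, so that after `N` beta steps the
binder with de Bruijn index `i` receives `g i` -/
def argsOf {N : ℕ} (g : Fin N → Exp S) : List (Exp S) := (List.ofFn g).reverse

/-- `U_i = (x_i' x_1' … x_n')` (under the outer binders) -/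
def Uarg (N : ℕ) (i : Fin N) : Exp S :=
  apps (.var (i : ℕ)) (argsOf (fun j : Fin N => .var (j : ℕ)))

/-- `X_i' = λ x1 … xn. F_i (x1 x1 … xn) … (xn x1 … xn)` with `F_i = λ x1 … xn. gi` -/
def Xarg (N : ℕ) (gi : Exp S) : Exp S :=
  lamN N (apps (lamN N (shiftCut N N gi))
    (argsOf (fun j : Fin N => apps (.var (j : ℕ)) (argsOf (fun l : Fin N => .var (l : ℕ))))))

/-- the translation of one letrec: `(λ x1' … xn'. (λ x1 … xn. t') U1 … Un) X1' … Xn'` -/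
def letrecTrans (N : ℕ) (g : Fin N → Exp S) (t' : Exp S) : Exp S :=
  apps (lamN N (apps (lamN N (shiftCut N N t')) (argsOf (Uarg N))))
    (argsOf (fun i => Xarg N (g i)))

/-- the translation `N : L_name → L_lcc`, eliminating letrec by multi-fixpoint
combinators; it is homomorphic on all other constructs.
(The translation `W : LR → L_name` is the identity.) -/
def Ntr : Exp S → Exp S
  | .var k => .var k
  | .app u v => .app (Ntr u) (Ntr v)
  | .lam u => .lam (Ntr u)
  | .constr T c args => .constr T c (fun i => Ntr (args i))
  | .seqE u v => .seqE (Ntr u) (Ntr v)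
  | .caseE T e alts => .caseE T (Ntr e) (fun c => Ntr (alts c))
  | .letrecE n b t => letrecTrans (n+1) (fun i => Ntr (b i)) (Ntr t)

end Core
namespace Core

variable {S : Sig}

/-! ## `Q`-similarity in `LR` -/

/-- open extension of a relation w.r.t. closing ℒ-substitutions -/
def openAll (η : Exp S → Exp S → Prop) (s t : Exp S) : Prop :=
  ∀ σ : ℕ → Exp S, closed (subst σ s) → closed (subst σ t) → η (subst σ s) (subst σ t)

/-- the `Q`-experiment operator for `LR`, instantiated with a set `𝒬` of contexts -/
def FQLR (𝒬 : Set (Exp S → Exp S)) (η : Exp S → Exp S → Prop) (s t : Exp S) : Prop :=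
  ∀ v1, lrConvTo s v1 → ∃ v2, lrConvTo t v2 ∧ ∀ f ∈ 𝒬, η (f v1) (f v2)

/-- `𝒬`-similarity in `LR` -/
def simQLR (𝒬 : Set (Exp S → Exp S)) : Exp S → Exp S → Prop := gfpRel (FQLR 𝒬)

/-- the inductively defined preorder `≤_{LR,𝒬}` -/
def leQLR (𝒬 : Set (Exp S → Exp S)) (s t : Exp S) : Prop :=
  ∀ l : List (Exp S → Exp S), (∀ f ∈ l, f ∈ 𝒬) →
    lrConv (applyAll l s) → lrConv (applyAll l t)

end Core

/-!
`NtrUnfold s` is `N(s)` with the letrecs on the evaluation spine already unfolded into their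
multi-fixpoints, so that `N(s) →*_lcc NtrUnfold s`. Every `→_name` step is simulated on
`NtrUnfold`: (beta), (seq), (case) and (gcp) by at least one `→_lcc` step, while the
letrec-shifting rules (lapp), (lseq), (lcase) leave `NtrUnfold` unchanged and decrease
`spineLetrecDepth`. Since an `L_name`-WHNF unfolds to a value, this gives
`s ↓_name → N(s) ↓_lcc`.

Conversely, every `L_name` expression can reduce, is a WHNF, or has a stuck unfolded translation.
As `→_lcc` is deterministic, `N(s) ↓_lcc` makes `NtrUnfold s` accessible for the converse
of `→⁺_lcc`, and a lexicographic induction on this accessibility and on `spineLetrecDepth`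
shows that the `→_name`-reduction of `s` reaches a WHNF.
-/

namespace Core

variable {S : Sig}

/-! ### Renaming and substitution -/

theorem liftN_comp (m : ℕ) (f g : ℕ → ℕ) :
    (fun k => liftN m f (liftN m g k)) = liftN m (fun k => f (g k)) := by
  funext x
  by_cases h : x < m <;> simp [liftN, h]

theorem liftN_liftN (m k : ℕ) (f : ℕ → ℕ) : liftN m (liftN k f) = liftN (m + k) f := by
  funext x
  simp only [liftN, Nat.sub_sub]
  split_ifs <;> omega

theorem liftN_id (m : ℕ) : liftN m (fun k => k) = fun k => k := by
  funext x
  simp only [liftN]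
  split_ifs <;> omega

theorem liftN_zero (f : ℕ → ℕ) : liftN 0 f = f := by
  funext x
  simp [liftN]

theorem upN_liftN (m : ℕ) (σ : ℕ → Exp S) (f : ℕ → ℕ) :
    (fun k => upN m σ (liftN m f k)) = upN m (fun k => σ (f k)) := by
  funext x
  by_cases h : x < m <;> simp [liftN, upN, h]

theorem rename_rename (f g : ℕ → ℕ) (e : Exp S) :
    rename f (rename g e) = rename (fun k => f (g k)) e := by
  induction e generalizing f g <;> simp [rename, liftN_comp, *]

theorem rename_id (e : Exp S) : rename (fun k => k) e = e := by
  induction e <;> simp [rename, liftN_id, *]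

theorem subst_rename (σ : ℕ → Exp S) (f : ℕ → ℕ) (e : Exp S) :
    subst σ (rename f e) = subst (fun k => σ (f k)) e := by
  induction e generalizing σ f <;> simp [rename, subst, upN_liftN, *]

theorem liftN_upN (m : ℕ) (f : ℕ → ℕ) (σ : ℕ → Exp S) :
    (fun k => rename (liftN m f) (upN m σ k)) = upN m (fun k => rename f (σ k)) := by
  funext x
  by_cases h : x < m
  · simp [upN, rename, liftN, h]
  · simp only [upN, h, if_false, rename_rename]
    congr 1
    funext y
    simp [liftN]

theorem rename_subst (f : ℕ → ℕ) (σ : ℕ → Exp S) (e : Exp S) :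
    rename f (subst σ e) = subst (fun k => rename f (σ k)) e := by
  induction e generalizing σ f <;> simp [rename, subst, liftN_upN, *]

theorem upN_upN (m : ℕ) (σ τ : ℕ → Exp S) :
    (fun k => subst (upN m σ) (upN m τ k)) = upN m (fun k => subst σ (τ k)) := by
  funext x
  by_cases h : x < m
  · simp [upN, subst, h]
  · simp only [upN, h, if_false, subst_rename, rename_subst]
    congr 1
    funext y
    simp

theorem subst_subst (σ τ : ℕ → Exp S) (e : Exp S) :
    subst σ (subst τ e) = subst (fun k => subst σ (τ k)) e := by
  induction e generalizing σ τ <;> simp [subst, upN_upN, *]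

theorem upN_var (m : ℕ) : upN m (fun k => Exp.var k) = (fun k => (Exp.var k : Exp S)) := by
  funext x
  by_cases h : x < m
  · simp [upN, h]
  · simp only [upN, h, ↓reduceIte, rename, Exp.var.injEq]
    omega

theorem subst_var (e : Exp S) : subst (fun k => Exp.var k) e = e := by
  induction e <;> simp [subst, upN_var, *]

theorem upN_zero (σ : ℕ → Exp S) : upN 0 σ = σ := by
  funext x
  simp [upN, rename_id]

theorem upN_add (m k : ℕ) (σ : ℕ → Exp S) : upN m (upN k σ) = upN (m + k) σ := by
  funext x
  simp only [upN, Nat.sub_sub]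
  split_ifs <;> try omega
  · rfl
  · simp only [rename, Exp.var.injEq]
    omega
  · simp [rename_rename, Nat.add_assoc, Nat.add_comm k m]

theorem instSub_add {N : ℕ} (X : Fin N → Exp S) (k : ℕ) : instSub X (k + N) = .var k := by
  simp [instSub]

theorem subst_instSub_rename_add {N : ℕ} (X : Fin N → Exp S) (e : Exp S) :
    subst (instSub X) (rename (· + N) e) = e := by
  simp only [subst_rename, instSub_add, subst_var]

theorem consSub_eq_instSub (t : Exp S) : consSub t = instSub (fun _ : Fin 1 => t) := by
  funext k
  cases k <;> simp [consSub, instSub]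

theorem subst_instSub_upN {m : ℕ} (σ : ℕ → Exp S) (args : Fin m → Exp S) (u : Exp S) :
    subst (instSub (fun i => subst σ (args i))) (subst (upN m σ) u)
      = subst σ (subst (instSub args) u) := by
  rw [subst_subst, subst_subst]
  congr 1
  funext k
  by_cases h : k < m
  · simp [upN, instSub, subst, h]
  · simp [upN, instSub, subst, h, subst_instSub_rename_add]

/-! ### Normal-order reduction of `L_lcc` -/

def compA : ACtx S → ACtx S → ACtx S
  | .hole, B => B
  | .appA A t, B => .appA (compA A B) t
  | .seqA A t, B => .seqA (compA A B) t
  | .caseA T A alts, B => .caseA T (compA A B) alts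

theorem plugA_compA (A B : ACtx S) (e : Exp S) :
    plugA (compA A B) e = plugA A (plugA B e) := by
  induction A <;> simp [compA, plugA, *]

def substA (σ : ℕ → Exp S) : ACtx S → ACtx S
  | .hole => .hole
  | .appA A t => .appA (substA σ A) (subst σ t)
  | .seqA A t => .seqA (substA σ A) (subst σ t)
  | .caseA T A alts => .caseA T (substA σ A) (fun c => subst (upN (S.arity T c) σ) (alts c))

theorem subst_plugA (σ : ℕ → Exp S) (A : ACtx S) (e : Exp S) :
    subst σ (plugA A e) = plugA (substA σ A) (subst σ e) := by
  induction A <;> simp [substA, plugA, subst, *]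

theorem isValue_subst (σ : ℕ → Exp S) {v : Exp S} (h : isValue v) : isValue (subst σ v) := by
  cases v <;> simp_all [isValue, subst]

theorem lccStep_plugA {s t : Exp S} (A : ACtx S) (h : lccStep s t) :
    lccStep (plugA A s) (plugA A t) := by
  obtain ⟨B, r, r', hr, rfl, rfl⟩ := h
  exact ⟨compA A B, r, r', hr, (plugA_compA ..).symm, (plugA_compA ..).symm⟩

theorem LccBase.subst {r r' : Exp S} (σ : ℕ → Exp S) (h : LccBase r r') :
    LccBase (subst σ r) (subst σ r') := by
  cases h with
  | nbeta =>
    simpa only [Core.subst, consSub_eq_instSub, ← subst_instSub_upN] using LccBase.nbeta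
  | nseq hv => exact .nseq (isValue_subst σ hv)
  | ncase => simpa only [Core.subst, ← subst_instSub_upN] using LccBase.ncase

theorem lccStep_subst {s t : Exp S} (σ : ℕ → Exp S) (h : lccStep s t) :
    lccStep (subst σ s) (subst σ t) := by
  obtain ⟨A, r, r', hr, rfl, rfl⟩ := h
  exact ⟨substA σ A, _, _, hr.subst σ, subst_plugA .., subst_plugA ..⟩

theorem reflTransGen_lccStep_plugA {s t : Exp S} (A : ACtx S)
    (h : Relation.ReflTransGen lccStep s t) :
    Relation.ReflTransGen lccStep (plugA A s) (plugA A t) :=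
  Relation.ReflTransGen.lift (plugA A) (fun _ _ => lccStep_plugA A) _ _ h

theorem transGen_lccStep_plugA {s t : Exp S} (A : ACtx S)
    (h : Relation.TransGen lccStep s t) :
    Relation.TransGen lccStep (plugA A s) (plugA A t) :=
  Relation.TransGen.lift (plugA A) (fun _ _ => lccStep_plugA A) _ _ h

theorem reflTransGen_lccStep_subst {s t : Exp S} (σ : ℕ → Exp S)
    (h : Relation.ReflTransGen lccStep s t) :
    Relation.ReflTransGen lccStep (subst σ s) (subst σ t) :=
  Relation.ReflTransGen.lift (subst σ) (fun _ _ => lccStep_subst σ) _ _ h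

theorem transGen_lccStep_subst {s t : Exp S} (σ : ℕ → Exp S)
    (h : Relation.TransGen lccStep s t) :
    Relation.TransGen lccStep (subst σ s) (subst σ t) :=
  Relation.TransGen.lift (subst σ) (fun _ _ => lccStep_subst σ) _ _ h

theorem lccStep_app_inv {f a t : Exp S} (h : lccStep (.app f a) t) :
    (∃ u, f = .lam u ∧ t = subst (consSub a) u) ∨ ∃ f', lccStep f f' ∧ t = .app f' a := by
  obtain ⟨A, r, r', hr, hs, rfl⟩ := h
  cases A with
  | hole => cases hr <;> cases hs; exact .inl ⟨_, rfl, rfl⟩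
  | appA A t =>
    obtain ⟨rfl, rfl⟩ := Exp.app.inj hs
    exact .inr ⟨_, ⟨A, r, r', hr, rfl, rfl⟩, rfl⟩
  | seqA | caseA => cases hs

theorem lccStep_seqE_inv {f a t : Exp S} (h : lccStep (.seqE f a) t) :
    (isValue f ∧ t = a) ∨ ∃ f', lccStep f f' ∧ t = .seqE f' a := by
  obtain ⟨A, r, r', hr, hs, rfl⟩ := h
  cases A with
  | hole => cases hr <;> cases hs; exact .inl ⟨‹_›, rfl⟩
  | seqA A t =>
    obtain ⟨rfl, rfl⟩ := Exp.seqE.inj hs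
    exact .inr ⟨_, ⟨A, r, r', hr, rfl, rfl⟩, rfl⟩
  | appA | caseA => cases hs

theorem lccStep_caseE_inv {T} {f : Exp S} {alts t} (h : lccStep (.caseE T f alts) t) :
    (∃ c args, f = .constr T c args ∧ t = subst (instSub args) (alts c)) ∨
      ∃ f', lccStep f f' ∧ t = .caseE T f' alts := by
  obtain ⟨A, r, r', hr, hs, rfl⟩ := h
  cases A with
  | hole => cases hr <;> cases hs; exact .inl ⟨_, _, rfl, rfl⟩
  | caseA T A alts =>
    cases hs
    exact .inr ⟨_, ⟨A, r, r', hr, rfl, rfl⟩, rfl⟩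
  | appA | seqA => cases hs

theorem not_lccStep_var (k : ℕ) (t : Exp S) : ¬ lccStep (.var k) t := by
  rintro ⟨A, r, r', hr, hs, -⟩
  cases A <;> cases hr <;> cases hs

theorem not_lccStep_of_isValue {v : Exp S} (hv : isValue v) (t : Exp S) : ¬ lccStep v t := by
  rintro ⟨A, r, r', hr, hs, -⟩
  cases A <;> cases hr <;> cases v <;> simp_all [isValue, plugA]

theorem not_lccStep_letrecE (n : ℕ) (b : Fin (n+1) → Exp S) (e t : Exp S) :
    ¬ lccStep (.letrecE n b e) t := by
  rintro ⟨A, r, r', hr, hs, -⟩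
  cases A <;> cases hr <;> cases hs

theorem lccStep_deterministic {s t₁ t₂ : Exp S} (h₁ : lccStep s t₁)
    (h₂ : lccStep s t₂) : t₁ = t₂ := by
  induction s generalizing t₁ t₂ with
  | app f a ih =>
    rcases lccStep_app_inv h₁ with ⟨u, rfl, rfl⟩ | ⟨f₁, hf₁, rfl⟩ <;>
      rcases lccStep_app_inv h₂ with ⟨u', hu, rfl⟩ | ⟨f₂, hf₂, rfl⟩
    · cases hu; rfl
    · exact absurd hf₂ (not_lccStep_of_isValue (v := .lam _) trivial _)
    · exact absurd (hu ▸ hf₁) (not_lccStep_of_isValue (v := .lam _) trivial _)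
    · rw [ih hf₁ hf₂]
  | seqE f a ih =>
    rcases lccStep_seqE_inv h₁ with ⟨hv, rfl⟩ | ⟨f₁, hf₁, rfl⟩ <;>
      rcases lccStep_seqE_inv h₂ with ⟨hv', rfl⟩ | ⟨f₂, hf₂, rfl⟩
    · rfl
    · exact absurd hf₂ (not_lccStep_of_isValue hv _)
    · exact absurd hf₁ (not_lccStep_of_isValue hv' _)
    · rw [ih hf₁ hf₂]
  | caseE T f alts ih =>
    rcases lccStep_caseE_inv h₁ with ⟨c, args, rfl, rfl⟩ | ⟨f₁, hf₁, rfl⟩ <;>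
      rcases lccStep_caseE_inv h₂ with ⟨c', args', hc, rfl⟩ | ⟨f₂, hf₂, rfl⟩
    · cases hc; rfl
    · exact absurd hf₂ (not_lccStep_of_isValue (v := .constr _ _ _) trivial _)
    · exact absurd (hc ▸ hf₁) (not_lccStep_of_isValue (v := .constr _ _ _) trivial _)
    · rw [ih hf₁ hf₂]
  | var k => exact absurd h₁ (not_lccStep_var k _)
  | lam => exact absurd h₁ (not_lccStep_of_isValue (v := .lam _) trivial _)
  | constr => exact absurd h₁ (not_lccStep_of_isValue (v := .constr _ _ _) trivial _)
  | letrecE n b e => exact absurd h₁ (not_lccStep_letrecE n b e _)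

theorem lccConv_of_lccStep {s t : Exp S} (hs : lccConv s) (hst : lccStep s t) : lccConv t := by
  obtain ⟨v, hsv, hv⟩ := hs
  rcases hsv.cases_head with rfl | ⟨t', hst', ht'v⟩
  · exact absurd hst (not_lccStep_of_isValue hv t)
  · exact ⟨v, lccStep_deterministic hst hst' ▸ ht'v, hv⟩

theorem lccConv_of_reflTransGen {s t : Exp S} (hs : lccConv s)
    (hst : Relation.ReflTransGen lccStep s t) : lccConv t := by
  induction hst with
  | refl => exact hs
  | tail _ h ih => exact lccConv_of_lccStep ih h

theorem acc_of_lccConv {s : Exp S} (hs : lccConv s) :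
    Acc (fun t s => Relation.TransGen lccStep s t) s := by
  obtain ⟨v, hsv, hv⟩ := hs
  have hacc : Acc (Function.swap lccStep) s := by
    induction hsv using Relation.ReflTransGen.head_induction_on with
    | refl => exact ⟨v, fun t ht => absurd ht (not_lccStep_of_isValue hv t)⟩
    | head hst _ ih => exact ⟨_, fun t ht => lccStep_deterministic hst ht ▸ ih⟩
  exact Subrelation.accessible Relation.transGen_swap.mpr hacc.transGen

def IsStuck (s : Exp S) : Prop := ¬ isValue s ∧ ∀ t, ¬ lccStep s t

theorem IsStuck.not_lccConv {s : Exp S} (h : IsStuck s) : ¬ lccConv s := by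
  rintro ⟨v, hsv, hv⟩
  rcases hsv.cases_head with rfl | ⟨t, hst, -⟩
  · exact h.1 hv
  · exact h.2 t hst

theorem IsStuck.plugA {s : Exp S} (h : IsStuck s) (A : ACtx S) : IsStuck (plugA A s) := by
  induction A with
  | hole => exact h
  | appA A a ih =>
    refine ⟨fun h => h, fun t ht => ?_⟩
    rcases lccStep_app_inv ht with ⟨u, hu, -⟩ | ⟨f, hf, -⟩
    · exact ih.1 (hu ▸ trivial)
    · exact ih.2 f hf
  | seqA A a ih =>
    refine ⟨fun h => h, fun t ht => ?_⟩
    rcases lccStep_seqE_inv ht with ⟨hv, -⟩ | ⟨f, hf, -⟩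
    · exact ih.1 hv
    · exact ih.2 f hf
  | caseA T A alts ih =>
    refine ⟨fun h => h, fun t ht => ?_⟩
    rcases lccStep_caseE_inv ht with ⟨c, args, hc, -⟩ | ⟨f, hf, -⟩
    · exact ih.1 (hc ▸ trivial)
    · exact ih.2 f hf

theorem isStuck_var (k : ℕ) : IsStuck (.var k : Exp S) :=
  ⟨fun h => h, not_lccStep_var k⟩

theorem isStuck_app_constr {T c args} (a : Exp S) : IsStuck (.app (.constr T c args) a) := by
  refine ⟨fun h => h, fun t ht => ?_⟩
  rcases lccStep_app_inv ht with ⟨u, hu, -⟩ | ⟨f, hf, -⟩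
  · cases hu
  · exact not_lccStep_of_isValue (v := .constr _ _ _) trivial f hf

theorem isStuck_caseE_lam {T} (u : Exp S) (alts) : IsStuck (.caseE T (.lam u) alts) := by
  refine ⟨fun h => h, fun t ht => ?_⟩
  rcases lccStep_caseE_inv ht with ⟨c, args, hc, -⟩ | ⟨f, hf, -⟩
  · cases hc
  · exact not_lccStep_of_isValue (v := .lam _) trivial f hf

theorem isStuck_caseE_constr_of_ne {T T'} {c' : S.CName T'} {args}
    (alts : (c : S.CName T) → Exp S) (hT : T' ≠ T) :
    IsStuck (.caseE T (.constr T' c' args) alts) := by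
  refine ⟨fun h => h, fun t ht => ?_⟩
  rcases lccStep_caseE_inv ht with ⟨c, args, hc, -⟩ | ⟨f, hf, -⟩
  · cases hc; exact hT rfl
  · exact not_lccStep_of_isValue (v := .constr _ _ _) trivial f hf

/-! ### The multi-fixpoint translation -/

theorem rename_apps (f : ℕ → ℕ) (h : Exp S) (l : List (Exp S)) :
    rename f (apps h l) = apps (rename f h) (l.map (rename f)) := by
  induction l generalizing h with
  | nil => rfl
  | cons a l ih => exact ih (.app h a)

theorem subst_apps (σ : ℕ → Exp S) (h : Exp S) (l : List (Exp S)) :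
    subst σ (apps h l) = apps (subst σ h) (l.map (subst σ)) := by
  induction l generalizing h with
  | nil => rfl
  | cons a l ih => exact ih (.app h a)

theorem rename_lamN (f : ℕ → ℕ) (k : ℕ) (e : Exp S) :
    rename f (lamN k e) = lamN k (rename (liftN k f) e) := by
  induction k generalizing f with
  | zero => simp [lamN, liftN_zero]
  | succ k ih => simp [lamN, rename, ih, liftN_liftN]

theorem subst_lamN (σ : ℕ → Exp S) (k : ℕ) (e : Exp S) :
    subst σ (lamN k e) = lamN k (subst (upN k σ) e) := by
  induction k generalizing σ with
  | zero => simp [lamN, upN_zero]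
  | succ k ih => simp [lamN, subst, ih, upN_add]

theorem map_argsOf {N : ℕ} (h : Exp S → Exp S) (g : Fin N → Exp S) :
    (argsOf g).map h = argsOf (fun i => h (g i)) := by
  simp [argsOf, List.map_reverse, List.map_ofFn, Function.comp_def]

theorem argsOf_succ {N : ℕ} (g : Fin (N+1) → Exp S) :
    argsOf g = g (Fin.last N) :: argsOf (fun i : Fin N => g i.castSucc) := by
  rw [argsOf, List.ofFn_succ', List.concat_eq_append, List.reverse_append]
  rfl

theorem rename_Uarg (f : ℕ → ℕ) {N : ℕ} (i : Fin N) :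
    rename (liftN N f) (Uarg N i) = (Uarg N i : Exp S) := by
  simp [Uarg, rename_apps, map_argsOf, rename, liftN]

theorem subst_Uarg (σ : ℕ → Exp S) {N : ℕ} (i : Fin N) :
    subst (upN N σ) (Uarg N i) = Uarg N i := by
  simp [Uarg, subst_apps, map_argsOf, subst, upN]

theorem rename_shiftCut (N : ℕ) (f : ℕ → ℕ) (e : Exp S) :
    rename (liftN N (liftN N f)) (shiftCut N N e) = shiftCut N N (rename (liftN N f) e) := by
  simp only [shiftCut, rename_rename]
  congr 1
  funext x
  simp only [liftN]
  split_ifs <;> (try simp only [Nat.add_sub_cancel] at *) <;> omega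

theorem subst_shiftCut (N : ℕ) (σ : ℕ → Exp S) (e : Exp S) :
    subst (upN N (upN N σ)) (shiftCut N N e) = shiftCut N N (subst (upN N σ) e) := by
  simp only [shiftCut, subst_rename, rename_subst]
  congr 1
  funext x
  by_cases h : x < N
  · simp [upN, h, rename]
  · simp only [upN, h, if_false, Nat.add_sub_cancel, rename_rename,
      show ¬ x + N < N by omega]
    congr 1
    funext y
    simp

/-- The common shape `(λx₁…xₙ. e) U₁ … Uₙ` of the bodies of `N(letrec …)` and of the
`Xᵢ'`. -/
def fixBody (N : ℕ) (e : Exp S) : Exp S :=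
  apps (lamN N (shiftCut N N e)) (argsOf (Uarg N))

theorem Xarg_eq (N : ℕ) (e : Exp S) : Xarg N e = lamN N (fixBody N e) := rfl

theorem letrecTrans_eq (N : ℕ) (g : Fin N → Exp S) (t : Exp S) :
    letrecTrans N g t = apps (lamN N (fixBody N t)) (argsOf fun i => Xarg N (g i)) := rfl

theorem rename_fixBody (f : ℕ → ℕ) (N : ℕ) (e : Exp S) :
    rename (liftN N f) (fixBody N e) = fixBody N (rename (liftN N f) e) := by
  simp [fixBody, rename_apps, rename_lamN, map_argsOf, rename_shiftCut, rename_Uarg]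

theorem subst_fixBody (σ : ℕ → Exp S) (N : ℕ) (e : Exp S) :
    subst (upN N σ) (fixBody N e) = fixBody N (subst (upN N σ) e) := by
  simp [fixBody, subst_apps, subst_lamN, map_argsOf, subst_shiftCut, subst_Uarg]

theorem rename_letrecTrans (f : ℕ → ℕ) (N : ℕ) (g : Fin N → Exp S) (t : Exp S) :
    rename f (letrecTrans N g t)
      = letrecTrans N (fun i => rename (liftN N f) (g i)) (rename (liftN N f) t) := by
  simp [letrecTrans_eq, Xarg_eq, rename_apps, rename_lamN, map_argsOf, rename_fixBody]

theorem subst_letrecTrans (σ : ℕ → Exp S) (N : ℕ) (g : Fin N → Exp S) (t : Exp S) :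
    subst σ (letrecTrans N g t)
      = letrecTrans N (fun i => subst (upN N σ) (g i)) (subst (upN N σ) t) := by
  simp [letrecTrans_eq, Xarg_eq, subst_apps, subst_lamN, map_argsOf, subst_fixBody]

theorem Ntr_rename (f : ℕ → ℕ) (e : Exp S) : Ntr (rename f e) = rename f (Ntr e) := by
  induction e generalizing f <;> simp [rename, Ntr, rename_letrecTrans, *]

theorem Ntr_upN (m : ℕ) (σ : ℕ → Exp S) :
    (fun k => Ntr (upN m σ k)) = upN m (fun k => Ntr (σ k)) := by
  funext x
  by_cases h : x < m <;> simp [upN, h, Ntr, Ntr_rename]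

theorem Ntr_subst (σ : ℕ → Exp S) (e : Exp S) :
    Ntr (subst σ e) = subst (fun k => Ntr (σ k)) (Ntr e) := by
  induction e generalizing σ <;> simp [subst, Ntr, subst_letrecTrans, Ntr_upN, *]

theorem Ntr_instSub {m : ℕ} (args : Fin m → Exp S) :
    (fun k => Ntr (instSub args k)) = instSub (fun i => Ntr (args i)) := by
  funext k
  by_cases h : k < m <;> simp [instSub, h, Ntr]

theorem isValue_Ntr {v : Exp S} (h : isValue v) : isValue (Ntr v) := by
  cases v <;> simp_all [isValue, Ntr]

theorem lccStep_apps {h h' : Exp S} (hh : lccStep h h') (l : List (Exp S)) :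
    lccStep (apps h l) (apps h' l) := by
  induction l generalizing h h' with
  | nil => exact hh
  | cons a l ih => exact ih (lccStep_plugA (.appA .hole a) hh)

theorem subst_instSub_castSucc_upN {N : ℕ} (g : Fin (N+1) → Exp S) (k : ℕ) :
    subst (instSub fun i : Fin N => g i.castSucc) (upN N (consSub (g (Fin.last N))) k)
      = instSub g k := by
  rcases lt_trichotomy k N with h | rfl | h
  · simp [upN, instSub, subst, h, Nat.lt_succ_of_lt h]
  · simp [upN, consSub, instSub, subst_instSub_rename_add, Fin.last]
  · obtain ⟨j, rfl⟩ : ∃ j, k = j + (N + 1) := ⟨k - (N + 1), by omega⟩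
    rw [instSub_add, show j + (N + 1) = j + 1 + N by omega]
    simp [upN, consSub, rename, subst, instSub_add]

theorem lccStep_apps_lamN_argsOf {N : ℕ} (g : Fin (N+1) → Exp S) (e : Exp S) :
    lccStep (apps (lamN (N+1) e) (argsOf g))
      (apps (lamN N (subst (upN N (consSub (g (Fin.last N)))) e))
        (argsOf fun i : Fin N => g i.castSucc)) := by
  rw [argsOf_succ, ← subst_lamN]
  exact lccStep_apps ⟨.hole, _, _, .nbeta, rfl, rfl⟩ _

theorem apps_lamN_argsOf_reflTransGen {N : ℕ} (g : Fin N → Exp S) (e : Exp S) :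
    Relation.ReflTransGen lccStep (apps (lamN N e) (argsOf g)) (subst (instSub g) e) := by
  induction N generalizing e with
  | zero =>
    have hvar : instSub g = .var := funext fun k => by simp [instSub]
    simpa [argsOf, lamN, apps, hvar, subst_var] using .refl
  | succ N ih =>
    refine .head (lccStep_apps_lamN_argsOf g e) ?_
    simpa only [subst_subst, subst_instSub_castSucc_upN] using
      ih (fun i : Fin N => g i.castSucc) (subst (upN N (consSub (g (Fin.last N)))) e)

theorem apps_lamN_argsOf_transGen {N : ℕ} (g : Fin (N+1) → Exp S) (e : Exp S) :
    Relation.TransGen lccStep (apps (lamN (N+1) e) (argsOf g)) (subst (instSub g) e) := by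
  refine .head' (lccStep_apps_lamN_argsOf g e) ?_
  simpa only [subst_subst, subst_instSub_castSucc_upN] using
    apps_lamN_argsOf_reflTransGen (fun i : Fin N => g i.castSucc)
      (subst (upN N (consSub (g (Fin.last N)))) e)

/-- `Dᵢ = Xᵢ' X₁' … Xₙ'`: the value of the `i`-th letrec variable once `N(letrec …)` has
been unfolded. -/
def multiFix (N : ℕ) (g : Fin N → Exp S) (i : Fin N) : Exp S :=
  apps (Xarg N (g i)) (argsOf fun j => Xarg N (g j))

theorem subst_instSub_fixBody {N : ℕ} (X : Fin N → Exp S) (e : Exp S) :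
    subst (instSub X) (fixBody N e)
      = apps (lamN N e) (argsOf fun j => apps (X j) (argsOf X)) := by
  have hshift : subst (upN N (instSub X)) (shiftCut N N e) = e := by
    rw [shiftCut, subst_rename]
    conv_rhs => rw [← subst_var e]
    congr 1
    funext k
    by_cases h : k < N
    · simp [upN, h]
    · obtain ⟨j, rfl⟩ : ∃ j, k = j + N := ⟨k - N, by omega⟩
      simp [upN, instSub_add, rename]
  simp [fixBody, subst_apps, subst_lamN, hshift, map_argsOf, Uarg, subst, instSub]

theorem letrecTrans_reflTransGen {N : ℕ} (g : Fin N → Exp S) (t : Exp S) :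
    Relation.ReflTransGen lccStep (letrecTrans N g t) (subst (instSub (multiFix N g)) t) := by
  rw [letrecTrans_eq]
  refine (apps_lamN_argsOf_reflTransGen _ _).trans ?_
  rw [subst_instSub_fixBody]
  exact apps_lamN_argsOf_reflTransGen _ _

theorem multiFix_transGen {N : ℕ} (g : Fin (N+1) → Exp S) (i : Fin (N+1)) :
    Relation.TransGen lccStep (multiFix (N+1) g i)
      (subst (instSub (multiFix (N+1) g)) (g i)) := by
  rw [multiFix, Xarg_eq]
  refine (apps_lamN_argsOf_transGen _ _).trans_left ?_
  rw [subst_instSub_fixBody]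
  exact apps_lamN_argsOf_reflTransGen _ _

/-! ### Simulating `→_name` by `→_lcc` -/

/-- `Ntr` with every letrec on the evaluation spine already unfolded, i.e. replaced by the
substitution of its multi-fixpoints `multiFix`. -/
def NtrUnfold : Exp S → Exp S
  | .var k => .var k
  | .app u v => .app (NtrUnfold u) (Ntr v)
  | .lam u => .lam (Ntr u)
  | .constr T c args => .constr T c (fun i => Ntr (args i))
  | .seqE u v => .seqE (NtrUnfold u) (Ntr v)
  | .caseE T e alts => .caseE T (NtrUnfold e) (fun c => Ntr (alts c))
  | .letrecE n b t => subst (instSub (multiFix (n+1) fun i => Ntr (b i))) (NtrUnfold t)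

def NtrA : ACtx S → ACtx S
  | .hole => .hole
  | .appA A t => .appA (NtrA A) (Ntr t)
  | .seqA A t => .seqA (NtrA A) (Ntr t)
  | .caseA T A alts => .caseA T (NtrA A) (fun c => Ntr (alts c))

theorem NtrUnfold_plugA (A : ACtx S) (e : Exp S) :
    NtrUnfold (plugA A e) = plugA (NtrA A) (NtrUnfold e) := by
  induction A <;> simp [plugA, NtrA, NtrUnfold, *]

theorem NtrUnfold_of_isValue {v : Exp S} (h : isValue v) : NtrUnfold v = Ntr v := by
  cases v <;> first | rfl | exact h.elim

theorem Ntr_reflTransGen_NtrUnfold (e : Exp S) :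
    Relation.ReflTransGen lccStep (Ntr e) (NtrUnfold e) := by
  induction e with
  | app u v ihu => exact reflTransGen_lccStep_plugA (.appA .hole (Ntr v)) ihu
  | seqE u v ihu => exact reflTransGen_lccStep_plugA (.seqA .hole (Ntr v)) ihu
  | caseE T e alts ihe => exact reflTransGen_lccStep_plugA (.caseA T .hole _) ihe
  | letrecE n b t _ iht =>
    exact (letrecTrans_reflTransGen _ _).trans (reflTransGen_lccStep_subst _ iht)
  | var | lam | constr => exact .refl

def frameFix : Frame S → ℕ → Exp S
  | ⟨n, b⟩ => instSub (multiFix (n+1) fun i => Ntr (b i))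

/-- The frames are listed innermost first, as for `lookRev`. -/
def frameSub : List (Frame S) → ℕ → Exp S
  | [] => .var
  | f :: rs => fun k => subst (frameSub rs) (frameFix f k)

theorem frameSub_append_singleton (rs : List (Frame S)) (f : Frame S) :
    frameSub (rs ++ [f]) = fun k => subst (frameFix f) (frameSub rs k) := by
  induction rs with
  | nil => simp [frameSub, subst_var, subst]
  | cons f' rs ih => simp [frameSub, ih, subst_subst]

theorem NtrUnfold_plugFrames (fs : List (Frame S)) (x : Exp S) :
    NtrUnfold (plugFrames fs x) = subst (frameSub fs.reverse) (NtrUnfold x) := by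
  induction fs with
  | nil => simp [plugFrames, frameSub, subst_var]
  | cons f fs ih =>
    change subst (frameFix f) (NtrUnfold (plugFrames fs x)) = _
    rw [ih, subst_subst, List.reverse_cons, frameSub_append_singleton]

/-- The unfolded form of a (gcp) step. -/
theorem frameSub_transGen_of_lookRev {rs : List (Frame S)} {k : ℕ} {e : Exp S}
    (h : lookRev rs k = some e) :
    Relation.TransGen lccStep (frameSub rs k) (subst (frameSub rs) (Ntr e)) := by
  induction rs generalizing k e with
  | nil => cases h
  | cons f rs ih =>
    obtain ⟨n, b⟩ := f
    by_cases hk : k < n + 1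
    · simp only [lookRev, hk, dif_pos, Option.some.injEq] at h
      subst h
      simpa [frameSub, frameFix, instSub, hk, subst_subst] using
        transGen_lccStep_subst (frameSub rs) (multiFix_transGen _ ⟨k, hk⟩)
    · simp only [lookRev, hk, dif_neg, not_false_eq_true, Option.map_eq_some_iff] at h
      obtain ⟨e', he', rfl⟩ := h
      have hvar : instSub (multiFix (n+1) fun i => Ntr (b i)) k = .var (k - (n+1)) := by
        simp [instSub, hk]
      simpa [frameSub, frameFix, hvar, subst, Ntr_rename, subst_rename, instSub_add]
        using ih he'

theorem frameSub_eq_var_of_lookRev {rs : List (Frame S)} {k : ℕ} (h : lookRev rs k = none) :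
    ∃ m, frameSub rs k = .var m := by
  induction rs generalizing k with
  | nil => exact ⟨k, rfl⟩
  | cons f rs ih =>
    obtain ⟨n, b⟩ := f
    by_cases hk : k < n + 1
    · simp [lookRev, hk] at h
    · simp only [lookRev, hk, dif_neg, not_false_eq_true, Option.map_eq_none_iff] at h
      simpa [frameSub, frameFix, instSub, hk, subst] using ih h

/-- Sum of the `A`-context depths (counted from `k`) of the letrecs on the evaluation spine;
the letrec-shifting rules (lapp), (lseq), (lcase) decrease it. -/
def spineLetrecDepth : ℕ → Exp S → ℕ
  | k, .app u _ => spineLetrecDepth (k+1) u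
  | k, .seqE u _ => spineLetrecDepth (k+1) u
  | k, .caseE _ e _ => spineLetrecDepth (k+1) e
  | k, .letrecE _ _ t => k + spineLetrecDepth k t
  | _, _ => 0

theorem spineLetrecDepth_plugFrames (fs : List (Frame S)) (x : Exp S) :
    spineLetrecDepth 0 (plugFrames fs x) = spineLetrecDepth 0 x := by
  induction fs with
  | nil => rfl
  | cons f fs ih =>
    change 0 + spineLetrecDepth 0 (plugFrames fs x) = _
    rw [ih, Nat.zero_add]

theorem spineLetrecDepth_plugA_lt {r r' : Exp S} (A : ACtx S)
    (h : ∀ k, spineLetrecDepth k r' < spineLetrecDepth k r) (k : ℕ) :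
    spineLetrecDepth k (plugA A r') < spineLetrecDepth k (plugA A r) := by
  induction A generalizing k with
  | hole => exact h k
  | appA A _ ih | seqA A _ ih | caseA _ A _ ih => exact ih (k+1)

theorem NBase.simulation {r r' : Exp S} (h : NBase r r') :
    lccStep (NtrUnfold r) (Ntr r') ∨
      NtrUnfold r = NtrUnfold r' ∧ ∀ k, spineLetrecDepth k r' < spineLetrecDepth k r := by
  cases h with
  | beta =>
    refine .inl ⟨.hole, _, _, .nbeta, rfl, ?_⟩
    simp [Ntr_subst, consSub_eq_instSub, Ntr_instSub, plugA]
  | seqv hv =>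
    refine .inl ⟨.hole, _, _, .nseq (isValue_Ntr hv), ?_, rfl⟩
    simp [NtrUnfold, NtrUnfold_of_isValue hv, plugA]
  | casec =>
    refine .inl ⟨.hole, _, _, .ncase, rfl, ?_⟩
    simp [Ntr_subst, Ntr_instSub, plugA]
  | lapp | lseq =>
    refine .inr ⟨?_, fun k => ?_⟩
    · simp [NtrUnfold, subst, Ntr_rename, subst_instSub_rename_add]
    · simp only [spineLetrecDepth]
      omega
  | lcase =>
    refine .inr ⟨?_, fun k => ?_⟩
    · simp [NtrUnfold, subst, Ntr_rename, subst_rename, upN_liftN, instSub_add, upN_var,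
        subst_var]
    · simp only [spineLetrecDepth]
      omega

theorem transGen_NtrUnfold_plugFrames_plugA {fs : List (Frame S)} (A : ACtx S) {r r' : Exp S}
    (h : Relation.TransGen lccStep (subst (frameSub fs.reverse) (NtrUnfold r))
      (subst (frameSub fs.reverse) (Ntr r'))) :
    Relation.TransGen lccStep (NtrUnfold (plugFrames fs (plugA A r)))
      (NtrUnfold (plugFrames fs (plugA A r'))) := by
  simp only [NtrUnfold_plugFrames, NtrUnfold_plugA, subst_plugA]
  exact (transGen_lccStep_plugA _ h).trans_left
    (reflTransGen_lccStep_plugA _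
      (reflTransGen_lccStep_subst _ (Ntr_reflTransGen_NtrUnfold r')))

theorem NStep.simulation {s s' : Exp S} (h : NStep s s') :
    Relation.TransGen lccStep (NtrUnfold s) (NtrUnfold s') ∨
      NtrUnfold s = NtrUnfold s' ∧ spineLetrecDepth 0 s' < spineLetrecDepth 0 s := by
  cases h with
  | @base fs A r r' hr =>
    rcases hr.simulation with hstep | ⟨heq, hlt⟩
    · exact .inl (transGen_NtrUnfold_plugFrames_plugA A (.single (lccStep_subst _ hstep)))
    · refine .inr ⟨?_, ?_⟩
      · simp only [NtrUnfold_plugFrames, NtrUnfold_plugA, heq]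
      · simpa only [spineLetrecDepth_plugFrames] using spineLetrecDepth_plugA_lt A hlt 0
  | gcp hlook =>
    exact .inl (transGen_NtrUnfold_plugFrames_plugA _ (frameSub_transGen_of_lookRev hlook))

/-! ### Progress in `L_name` -/

inductive IsFrame : ACtx S → Prop
  | app (t : Exp S) : IsFrame (.appA .hole t)
  | seq (t : Exp S) : IsFrame (.seqA .hole t)
  | case (T : S.TyName) (alts : (c : S.CName T) → Exp S) : IsFrame (.caseA T .hole alts)

theorem ACtx.eq_hole_or_compA_frame (A : ACtx S) :
    A = .hole ∨ ∃ A' F, IsFrame F ∧ A = compA A' F := by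
  induction A with
  | hole => exact .inl rfl
  | appA A t ih =>
    rcases ih with rfl | ⟨A', F, hF, rfl⟩
    · exact .inr ⟨.hole, _, .app t, rfl⟩
    · exact .inr ⟨.appA A' t, F, hF, rfl⟩
  | seqA A t ih =>
    rcases ih with rfl | ⟨A', F, hF, rfl⟩
    · exact .inr ⟨.hole, _, .seq t, rfl⟩
    · exact .inr ⟨.seqA A' t, F, hF, rfl⟩
  | caseA T A alts ih =>
    rcases ih with rfl | ⟨A', F, hF, rfl⟩
    · exact .inr ⟨.hole, _, .case T alts, rfl⟩
    · exact .inr ⟨.caseA T A' alts, F, hF, rfl⟩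

theorem plugFrames_append (fs fs' : List (Frame S)) (x : Exp S) :
    plugFrames (fs ++ fs') x = plugFrames fs (plugFrames fs' x) := by
  induction fs with
  | nil => rfl
  | cons f fs ih => exact congrArg (Exp.letrecE f.1 f.2) ih

def NameProgress (s : Exp S) : Prop :=
  (∃ s', NStep s s') ∨ isNameWhnf s ∨ ¬ lccConv (NtrUnfold s)

theorem NameProgress.of_isStuck {fs : List (Frame S)} (A : ACtx S) {t : Exp S}
    (h : IsStuck (subst (frameSub fs.reverse) (NtrUnfold t))) :
    NameProgress (plugFrames fs (plugA A t)) := by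
  refine .inr (.inr ?_)
  rw [NtrUnfold_plugFrames, NtrUnfold_plugA, subst_plugA]
  exact (h.plugA _).not_lccConv

theorem NameProgress.var (fs : List (Frame S)) (A : ACtx S) (k : ℕ) :
    NameProgress (plugFrames fs (plugA A (.var k))) := by
  cases hk : lookRev fs.reverse k with
  | some e => exact .inl ⟨_, .gcp hk⟩
  | none =>
    obtain ⟨m, hm⟩ := frameSub_eq_var_of_lookRev hk
    exact .of_isStuck A (by simpa [NtrUnfold, subst, hm] using isStuck_var m)

theorem NameProgress.value_frame (fs : List (Frame S)) (A : ACtx S) {F : ACtx S}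
    (hF : IsFrame F) {v : Exp S} (hv : isValue v) :
    NameProgress (plugFrames fs (plugA (compA A F) v)) := by
  rw [plugA_compA]
  cases hF with
  | app t =>
    cases v with
    | lam u => exact .inl ⟨_, .base .beta⟩
    | constr T c args => exact .of_isStuck A (isStuck_app_constr _)
    | _ => exact hv.elim
  | seq t => exact .inl ⟨_, .base (.seqv hv)⟩
  | case T alts =>
    cases v with
    | lam u => exact .of_isStuck A (isStuck_caseE_lam _ _)
    | constr T' c args =>
      by_cases hT : T' = T
      · subst hT
        exact .inl ⟨_, .base .casec⟩
      · exact .of_isStuck A (isStuck_caseE_constr_of_ne _ hT)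
    | _ => exact hv.elim

theorem NameProgress.letrecE_frame (fs : List (Frame S)) (A : ACtx S) {F : ACtx S}
    (hF : IsFrame F) (n : ℕ) (b : Fin (n+1) → Exp S) (e : Exp S) :
    NameProgress (plugFrames fs (plugA (compA A F) (.letrecE n b e))) := by
  rw [plugA_compA]
  cases hF with
  | app t => exact .inl ⟨_, .base .lapp⟩
  | seq t => exact .inl ⟨_, .base .lseq⟩
  | case T alts => exact .inl ⟨_, .base .lcase⟩

theorem NameProgress.plugFrames_plugA (t : Exp S) (fs : List (Frame S)) (A : ACtx S) :
    NameProgress (plugFrames fs (plugA A t)) := by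
  induction t generalizing fs A with
  | var k => exact .var fs A k
  | lam u =>
    rcases A.eq_hole_or_compA_frame with rfl | ⟨A', F, hF, rfl⟩
    · exact .inr (.inl ⟨fs, _, rfl, trivial⟩)
    · exact .value_frame fs A' hF trivial
  | constr T c args =>
    rcases A.eq_hole_or_compA_frame with rfl | ⟨A', F, hF, rfl⟩
    · exact .inr (.inl ⟨fs, _, rfl, trivial⟩)
    · exact .value_frame fs A' hF trivial
  | letrecE n b t _ iht =>
    rcases A.eq_hole_or_compA_frame with rfl | ⟨A', F, hF, rfl⟩
    · have h := iht (fs ++ [⟨n, b⟩]) .hole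
      rw [plugFrames_append] at h
      exact h
    · exact .letrecE_frame fs A' hF n b t
  | app u v ihu => simpa only [plugA_compA, plugA] using ihu fs (compA A (.appA .hole v))
  | seqE u v ihu => simpa only [plugA_compA, plugA] using ihu fs (compA A (.seqA .hole v))
  | caseE T u alts ihu =>
    simpa only [plugA_compA, plugA] using ihu fs (compA A (.caseA T .hole alts))

theorem nameProgress (s : Exp S) : NameProgress s :=
  NameProgress.plugFrames_plugA s [] .hole

/-! ### Convergence equivalence -/

theorem isValue_NtrUnfold_of_isNameWhnf {w : Exp S} (h : isNameWhnf w) :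
    isValue (NtrUnfold w) := by
  obtain ⟨fs, v, rfl, hv⟩ := h
  rw [NtrUnfold_plugFrames, NtrUnfold_of_isValue hv]
  exact isValue_subst _ (isValue_Ntr hv)

theorem NtrUnfold_reflTransGen {s s' : Exp S} (h : Relation.ReflTransGen NStep s s') :
    Relation.ReflTransGen lccStep (NtrUnfold s) (NtrUnfold s') := by
  induction h with
  | refl => exact .refl
  | tail _ hst ih =>
    rcases hst.simulation with htg | ⟨heq, -⟩
    · exact ih.trans htg.to_reflTransGen
    · exact heq ▸ ih

theorem lccConv_Ntr_of_nameConv {s : Exp S} (h : nameConv s) : lccConv (Ntr s) := by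
  obtain ⟨w, hsw, hw⟩ := h
  exact ⟨_, (Ntr_reflTransGen_NtrUnfold s).trans (NtrUnfold_reflTransGen hsw),
    isValue_NtrUnfold_of_isNameWhnf hw⟩

theorem nameConv_of_lccConv_NtrUnfold {s : Exp S} (h : lccConv (NtrUnfold s)) : nameConv s := by
  generalize he : NtrUnfold s = e at h
  induction acc_of_lccConv h generalizing s with
  | intro e _ ihAcc =>
    induction hm : spineLetrecDepth 0 s using Nat.strong_induction_on generalizing s with
    | _ m ihm =>
      rcases nameProgress s with ⟨s', hss'⟩ | hw | hdiv
      · have extend : nameConv s' → nameConv s :=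
          fun ⟨w, hs'w, hw⟩ => ⟨w, .head hss' hs'w, hw⟩
        rcases hss'.simulation with htg | ⟨heq, hlt⟩
        · subst he
          exact extend (ihAcc _ htg rfl (lccConv_of_reflTransGen h htg.to_reflTransGen))
        · exact extend (ihm _ (hm ▸ hlt) (heq ▸ he) rfl)
      · exact ⟨s, .refl, hw⟩
      · exact absurd (he ▸ h) hdiv

/-- The multi-fixpoint-combinator translation `N` is
convergence-equivalent: `s ↓_name` iff `N(s) ↓_lcc`. -/
theorem N_convergence_equivalent (S : Sig) :
    ∀ s : Exp S, nameConv s ↔ lccConv (Ntr s) :=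
  fun s => ⟨lccConv_Ntr_of_nameConv, fun h =>
    nameConv_of_lccConv_NtrUnfold (lccConv_of_reflTransGen h (Ntr_reflTransGen_NtrUnfold s))⟩

end Core
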